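/- arXiv:1909.07010 — 2 statements merged into one kernel-verified Lean document; each statement's English description precedes it below -/
import Mathlib

section
/- Let n ≥ 2, ε ∈ {0,1} and ℓ ≥ ε be integers. Then the number of (n+1)-tuples m = (m_0, …, m_n) of nonnegative integers with m_0 + 2(m_1 + ⋯ + m_{n−1}) + m_n = ℓ and m_n ≡ ε (mod 2) equals C(n + ⌊(ℓ−ε)/2⌋, n), where C(·,·) is the binomial coefficient. (For ε = 0 this is the number of dominant maximal weights of V(ℓΛ_0) over D_{n+1}^{(2)}, and for ε = 1 that of V((ℓ−1)Λ_0 + Λ_n).) -/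
/-!
Split the two end coordinates by parity, `m₀ = 2a₀ + r` and `mₙ = 2aₙ + ε`; the equation forces
`r ≡ ℓ - ε (mod 2)`, and it becomes `a₀ + m₁ + ⋯ + mₙ₋₁ + aₙ = ⌊(ℓ - ε)/2⌋`. So the tuples are in
bijection with the weak compositions of `⌊(ℓ - ε)/2⌋` into `n + 1` parts, of which there are
`C(n + ⌊(ℓ - ε)/2⌋, n)`.
-/

open Finset

theorem card_piAntidiag_univ {ι : Type*} [Fintype ι] [DecidableEq ι] (L : ℕ) :
    #(piAntidiag (univ : Finset ι) L) = (Fintype.card ι).multichoose L := by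
  rw [← map_sym_eq_piAntidiag, card_map, sym_univ, card_univ, Sym.card_sym_eq_multichoose]

section Residues

variable {ι : Type*}

theorem card_eq_card_piAntidiag_of_residues [Fintype ι] [DecidableEq ι] (q c : ι → ℕ)
    (hc : ∀ i, c i < q i) (L : ℕ) (S : Finset (ι → ℕ))
    (hS : ∀ m, m ∈ S ↔ (∀ i, m i % q i = c i) ∧ ∑ i, m i / q i = L) :
    #S = #(piAntidiag (univ : Finset ι) L) := by
  have hq : ∀ i, 0 < q i := fun i => (Nat.zero_le _).trans_lt (hc i)
  have div_affine : ∀ (g : ι → ℕ) i, (q i * g i + c i) / q i = g i := fun g i => by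
    rw [Nat.mul_add_div (hq i), Nat.div_eq_of_lt (hc i), add_zero]
  refine card_nbij' (fun m i => m i / q i) (fun g i => q i * g i + c i) ?_ ?_ ?_ ?_
  · intro m hm
    simpa [mem_piAntidiag] using ((hS m).1 hm).2
  · intro g hg
    rw [mem_coe, mem_piAntidiag] at hg
    refine (hS _).2 ⟨fun i => ?_, ?_⟩
    · rw [Nat.mul_add_mod, Nat.mod_eq_of_lt (hc i)]
    · simpa only [div_affine] using hg.1
  · intro m hm
    funext i
    simp only [← ((hS m).1 hm).1 i, Nat.div_add_mod]
  · intro g _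
    funext i
    exact div_affine g i

theorem sum_mul_eq_mul_sum_div_add_sum_mul_mod (s : Finset ι) (w q : ι → ℕ) {k : ℕ}
    (hwq : ∀ i, w i * q i = k) (m : ι → ℕ) :
    ∑ i ∈ s, w i * m i = k * ∑ i ∈ s, m i / q i + ∑ i ∈ s, w i * (m i % q i) := by
  conv_lhs => enter [2, i]; rw [← Nat.div_add_mod (m i) (q i), mul_add, ← mul_assoc, hwq]
  rw [sum_add_distrib, mul_sum]

end Residues

theorem Fin.zero_ne_last_of_one_le {n : ℕ} (hn : 1 ≤ n) : (0 : Fin (n + 1)) ≠ Fin.last n := by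
  rw [ne_eq, Fin.ext_iff, Fin.val_zero, Fin.val_last]
  omega

def dualMark (n : ℕ) (i : Fin (n + 1)) : ℕ := if (i : ℕ) = 0 ∨ (i : ℕ) = n then 1 else 2

def maximalDominantTuples (n ℓ ε : ℕ) : Finset (Fin (n + 1) → ℕ) :=
  (Fintype.piFinset fun _ => range (ℓ + 1)).filter
    fun m => ∑ i, dualMark n i * m i = ℓ ∧ m (Fin.last n) % 2 = ε

def endpointResidues (n a b : ℕ) (i : Fin (n + 1)) : ℕ :=
  if i = 0 then a else if i = Fin.last n then b else 0

namespace dualMark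

variable {n : ℕ}

@[simp] theorem zero : dualMark n 0 = 1 := by simp [dualMark]

@[simp] theorem last : dualMark n (Fin.last n) = 1 := by simp [dualMark]

theorem of_ne {i : Fin (n + 1)} (h0 : i ≠ 0) (hl : i ≠ Fin.last n) : dualMark n i = 2 := by
  rw [dualMark, if_neg]
  rw [Ne, Fin.ext_iff, Fin.val_zero] at h0
  rw [Ne, Fin.ext_iff, Fin.val_last] at hl
  tauto

theorem pos (i : Fin (n + 1)) : 0 < dualMark n i := by
  unfold dualMark; split_ifs <;> norm_num

theorem mul_two_div (i : Fin (n + 1)) : dualMark n i * (2 / dualMark n i) = 2 := by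
  unfold dualMark; split_ifs <;> rfl

theorem sum_mul_mod_two_div (hn : 1 ≤ n) (m : Fin (n + 1) → ℕ) :
    ∑ i, dualMark n i * (m i % (2 / dualMark n i)) = m 0 % 2 + m (Fin.last n) % 2 := by
  rw [Fintype.sum_eq_add 0 (Fin.last n) (Fin.zero_ne_last_of_one_le hn)
    fun i ⟨h0, hl⟩ => by simp [of_ne h0 hl, Nat.mod_one]]
  simp

theorem sum_mul_eq (hn : 1 ≤ n) (m : Fin (n + 1) → ℕ) :
    ∑ i, dualMark n i * m i
      = 2 * ∑ i, m i / (2 / dualMark n i) + m 0 % 2 + m (Fin.last n) % 2 := by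
  rw [sum_mul_eq_mul_sum_div_add_sum_mul_mod _ _ _ mul_two_div, sum_mul_mod_two_div hn, add_assoc]

theorem two_div_pos (i : Fin (n + 1)) : 0 < 2 / dualMark n i :=
  Nat.pos_of_ne_zero fun h => by simpa [h] using mul_two_div i

end dualMark

theorem endpointResidues_lt_two_div {n a b : ℕ} (ha : a < 2) (hb : b < 2) (i : Fin (n + 1)) :
    endpointResidues n a b i < 2 / dualMark n i := by
  unfold endpointResidues
  split_ifs with h0 hl
  · simpa [h0] using ha
  · simpa [hl] using hb
  · exact dualMark.two_div_pos i

theorem mem_maximalDominantTuples_iff {n ℓ ε : ℕ} (hn : 1 ≤ n) (hℓ : ε ≤ ℓ)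
    (m : Fin (n + 1) → ℕ) :
    m ∈ maximalDominantTuples n ℓ ε ↔
      (∀ i, m i % (2 / dualMark n i) = endpointResidues n ((ℓ - ε) % 2) ε i) ∧
        ∑ i, m i / (2 / dualMark n i) = (ℓ - ε) / 2 := by
  have hl0 := (Fin.zero_ne_last_of_one_le hn).symm
  have hsum := dualMark.sum_mul_eq hn m
  simp only [maximalDominantTuples, mem_filter, Fintype.mem_piFinset, mem_range]
  constructor
  · rintro ⟨-, hℓm, hεm⟩
    refine ⟨fun i => ?_, by omega⟩
    by_cases h0 : i = 0
    · subst h0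
      simp only [dualMark.zero, Nat.div_one, endpointResidues, ↓reduceIte]
      omega
    by_cases hl : i = Fin.last n
    · subst hl; simp [endpointResidues, hl0, hεm]
    · simp [endpointResidues, dualMark.of_ne h0 hl, h0, hl, Nat.mod_one]
  · rintro ⟨hres, hdiv⟩
    have hm0 := hres 0
    have hml := hres (Fin.last n)
    simp only [dualMark.zero, dualMark.last, Nat.div_one, endpointResidues, ↓reduceIte, hl0]
      at hm0 hml
    have hℓm : ∑ i, dualMark n i * m i = ℓ := by omega
    refine ⟨fun i => Nat.lt_succ_of_le ?_, hℓm, hml⟩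
    calc m i ≤ dualMark n i * m i := Nat.le_mul_of_pos_left _ (dualMark.pos i)
      _ ≤ ℓ := hℓm ▸ single_le_sum (f := fun j => dualMark n j * m j) (by simp) (mem_univ i)

/-- **Number of dominant maximal weights in type `D_{n+1}^(2)`.**
For `n ≥ 2`, `ε ∈ {0,1}` and `ℓ ≥ ε`, the number of `(n+1)`-tuples `m` of nonnegative
integers with `m_0 + 2(m_1 + ⋯ + m_{n-1}) + m_n = ℓ` and `m_n ≡ ε (mod 2)` equals
`C(n + ⌊(ℓ-ε)/2⌋, n)`. -/
theorem stmt_15 (n ℓ ε : ℕ) (hn : 2 ≤ n) (hε : ε ≤ 1) (hℓ : ε ≤ ℓ) :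
    (((Fintype.piFinset fun _ : Fin (n + 1) => Finset.range (ℓ + 1)).filter
        (fun m =>
          (∑ i : Fin (n + 1),
            (if (i : ℕ) = 0 ∨ (i : ℕ) = n then 1 else 2) * m i = ℓ)
          ∧ m (Fin.last n) % 2 = ε)).card)
      = Nat.choose (n + (ℓ - ε) / 2) n := by
  calc #(maximalDominantTuples n ℓ ε)
      = #(piAntidiag (univ : Finset (Fin (n + 1))) ((ℓ - ε) / 2)) :=
        card_eq_card_piAntidiag_of_residues _ _
          (endpointResidues_lt_two_div (Nat.mod_lt _ two_pos) (by omega)) _ _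
          (mem_maximalDominantTuples_iff (by omega) hℓ)
    _ = (n + (ℓ - ε) / 2).choose n := by
        rw [card_piAntidiag_univ, Fintype.card_fin, Nat.multichoose_eq, add_right_comm,
          Nat.add_sub_cancel, Nat.choose_symm_add]
end

section
/- For integers n ≥ 0 and ℓ ≥ 0, let T(n,ℓ) denote the number of (n+1)-tuples m = (m_0, …, m_n) of nonnegative integers with m_0 + ⋯ + m_n = ℓ and ∑_{r odd} m_r ≡ 0 (mod 2). Then for all integers n ≥ 1 and ℓ ≥ 1, T(n,ℓ) = T(n,ℓ−1) + T(n−1,ℓ) − c(n,ℓ), where c(n,ℓ) = C((n+ℓ)/2 − 1, (ℓ−1)/2) if both n and ℓ are odd, and c(n,ℓ) = 0 otherwise; here C(·,·) is the binomial coefficient. (This is the Lozanić-triangle recursion for the number of dominant maximal weights of V(ℓΛ_0) over C_n^{(1)}.) -/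
open Finset

/-- `lozanicT n ℓ` is the number of `(n+1)`-tuples `m` of nonnegative integers with
`m_0 + ⋯ + m_n = ℓ` and `∑_{r odd} m_r ≡ 0 (mod 2)`; it equals the number of dominant
maximal weights of `V(ℓΛ_0)` over `C_n^(1)` (Lozanić's triangle). -/
def lozanicT (n ℓ : ℕ) : ℕ :=
  ((Fintype.piFinset fun _ : Fin (n + 1) => Finset.range (ℓ + 1)).filter
    (fun m => ∑ r, m r = ℓ ∧
      (∑ r ∈ Finset.univ.filter (fun r : Fin (n + 1) => (r : ℕ) % 2 = 1), m r) % 2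
        = 0)).card

def oddSum {k : ℕ} (m : Fin k → ℕ) : ℕ :=
  ∑ r ∈ Finset.univ.filter (fun r : Fin k => (r : ℕ) % 2 = 1), m r

def P (k ℓ p : ℕ) : ℕ :=
  ((Fintype.piFinset fun _ : Fin k => Finset.range (ℓ + 1)).filter
    (fun m => ∑ r, m r = ℓ ∧ oddSum m % 2 = p)).card

lemma oddSum_eq (k : ℕ) (m : Fin (k+1) → ℕ) :
    oddSum m = oddSum (Fin.init m) + if k % 2 = 1 then m (Fin.last k) else 0 := by
  unfold oddSum
  rw [Finset.sum_filter, Finset.sum_filter, Fin.sum_univ_castSucc]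
  simp [Fin.init, Fin.val_last]

lemma sum_init (k : ℕ) (m : Fin (k+1) → ℕ) :
    ∑ r : Fin (k+1), m r = ∑ r : Fin k, Fin.init m r + m (Fin.last k) := by
  rw [Fin.sum_univ_castSucc]; rfl

lemma P_split (k ℓ p : ℕ) (hp : p < 2) :
    P (k+1) (ℓ+1) p = P k (ℓ+1) p + P (k+1) ℓ ((p + k) % 2) := by
  unfold P
  rw [← Finset.card_filter_add_card_filter_not
    (p := fun m : Fin (k+1) → ℕ => m (Fin.last k) = 0)]
  congr 1
  · refine Finset.card_bij' (fun m _ => Fin.init m) (fun m _ => Fin.snoc m 0)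
      ?hi ?hj ?li ?ri
    case hi =>
      intro m hm
      simp only [Finset.mem_filter, Fintype.mem_piFinset, Finset.mem_range] at hm ⊢
      obtain ⟨⟨hbox, hsum, hpar⟩, hlast⟩ := hm
      rw [sum_init] at hsum
      have hOS := oddSum_eq k m
      rw [hlast] at hOS
      have hOS' : oddSum m = oddSum (Fin.init m) := by rw [hOS]; split <;> simp
      exact ⟨fun r => hbox _, by omega, by omega⟩
    case hj =>
      intro m hm
      simp only [Finset.mem_filter, Fintype.mem_piFinset, Finset.mem_range] at hm ⊢
      obtain ⟨hbox, hsum, hpar⟩ := hm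
      have hsum' : ∑ r : Fin (k+1), Fin.snoc m 0 r = ∑ r : Fin k, m r + 0 := by
        rw [sum_init, Fin.init_snoc, Fin.snoc_last]
      have hOS := oddSum_eq k (Fin.snoc m 0)
      rw [Fin.snoc_last, Fin.init_snoc] at hOS
      have hOS' : oddSum (Fin.snoc m 0) = oddSum m := by rw [hOS]; split <;> simp
      refine ⟨⟨?_, by omega, by omega⟩, by simp⟩
      intro r
      refine Fin.lastCases ?_ ?_ r
      · simp
      · intro i; simpa using hbox i
    case li =>
      intro m hm
      simp only [Finset.mem_filter] at hm
      funext r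
      refine Fin.lastCases ?_ ?_ r
      · rw [Fin.snoc_last, hm.2]
      · intro i; rw [Fin.snoc_castSucc]; rfl
    case ri =>
      intro m hm
      exact Fin.init_snoc _ _
  · refine Finset.card_bij'
      (fun m _ => Fin.snoc (Fin.init m) (m (Fin.last k) - 1))
      (fun m _ => Fin.snoc (Fin.init m) (m (Fin.last k) + 1)) ?hi ?hj ?li ?ri
    case hi =>
      intro m hm
      simp only [Finset.mem_filter, Fintype.mem_piFinset, Finset.mem_range] at hm ⊢
      obtain ⟨⟨hbox, hsum, hpar⟩, hlast⟩ := hm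
      rw [sum_init] at hsum
      have hlast2 : m (Fin.last k) < ℓ + 2 := hbox _
      have hOSm := oddSum_eq k m
      have hsum2 := sum_init k (Fin.snoc (Fin.init m) (m (Fin.last k) - 1))
      rw [Fin.snoc_last, Fin.init_snoc] at hsum2
      have hOS := oddSum_eq k (Fin.snoc (Fin.init m) (m (Fin.last k) - 1))
      rw [Fin.snoc_last, Fin.init_snoc] at hOS
      refine ⟨?_, by omega, ?_⟩
      · intro r
        refine Fin.lastCases ?_ ?_ r
        · rw [Fin.snoc_last]; omega
        · intro i
          rw [Fin.snoc_castSucc]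
          have h1 : Fin.init m i ≤ ∑ r : Fin k, Fin.init m r :=
            Finset.single_le_sum (fun r _ => Nat.zero_le _) (Finset.mem_univ i)
          omega
      · rcases Nat.mod_two_eq_zero_or_one k with hk | hk <;>
          rw [hk] at hOS hOSm <;> norm_num at hOS hOSm <;> omega
    case hj =>
      intro m hm
      simp only [Finset.mem_filter, Fintype.mem_piFinset, Finset.mem_range] at hm ⊢
      obtain ⟨hbox, hsum, hpar⟩ := hm
      rw [sum_init] at hsum
      have hOSm := oddSum_eq k m
      have hsum2 := sum_init k (Fin.snoc (Fin.init m) (m (Fin.last k) + 1))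
      rw [Fin.snoc_last, Fin.init_snoc] at hsum2
      have hOS := oddSum_eq k (Fin.snoc (Fin.init m) (m (Fin.last k) + 1))
      rw [Fin.snoc_last, Fin.init_snoc] at hOS
      refine ⟨⟨?_, by omega, ?_⟩, by simp⟩
      · intro r
        refine Fin.lastCases ?_ ?_ r
        · rw [Fin.snoc_last]
          have := hbox (Fin.last k); omega
        · intro i
          rw [Fin.snoc_castSucc]
          have := hbox i.castSucc
          simp only [Fin.init]
          omega
      · rcases Nat.mod_two_eq_zero_or_one k with hk | hk <;>
          rw [hk] at hOS hOSm <;> norm_num at hOS hOSm <;> omega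
    case li =>
      intro m hm
      simp only [Finset.mem_filter] at hm
      have hlast : m (Fin.last k) ≠ 0 := hm.2
      rw [Fin.snoc_last, Fin.init_snoc]
      have h2 : m (Fin.last k) - 1 + 1 = m (Fin.last k) := by omega
      rw [h2, Fin.snoc_init_self]
    case ri =>
      intro m hm
      rw [Fin.snoc_last, Fin.init_snoc]
      simp [Fin.snoc_init_self]

lemma P_zero (k p : ℕ) : P k 0 p = if p = 0 then 1 else 0 := by
  unfold P
  have h : ((Fintype.piFinset fun _ : Fin k => Finset.range (0 + 1)).filter
      (fun m => ∑ r, m r = 0 ∧ oddSum m % 2 = p)) =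
      if p = 0 then {fun _ => 0} else ∅ := by
    ext m
    simp only [Finset.mem_filter, Fintype.mem_piFinset, Finset.mem_range]
    constructor
    · rintro ⟨h1, h2, h3⟩
      have hm0 : m = fun _ => 0 := funext fun r => by have := h1 r; omega
      subst hm0
      have h0 : oddSum (fun _ : Fin k => 0) = 0 := by simp [oddSum]
      rw [h0] at h3
      simp at h3
      simp [← h3]
    · intro hm
      by_cases hpp : p = 0
      · rw [if_pos hpp, Finset.mem_singleton] at hm
        subst hm
        refine ⟨fun r => by simp, by simp, ?_⟩
        have h0 : oddSum (fun _ : Fin k => 0) = 0 := by simp [oddSum]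
        rw [h0]; omega
      · rw [if_neg hpp] at hm; exact absurd hm (Finset.notMem_empty m)
  rw [h]; split <;> simp

lemma P_one (ℓ p : ℕ) : P 1 ℓ p = if p = 0 then 1 else 0 := by
  unfold P
  have hodd : ∀ m : Fin 1 → ℕ, oddSum m = 0 := by
    intro m
    unfold oddSum
    have : Finset.univ.filter (fun r : Fin 1 => (r : ℕ) % 2 = 1) = ∅ := by decide
    rw [this, Finset.sum_empty]
  have h : ((Fintype.piFinset fun _ : Fin 1 => Finset.range (ℓ + 1)).filter
      (fun m => ∑ r, m r = ℓ ∧ oddSum m % 2 = p)) =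
      if p = 0 then {fun _ => ℓ} else ∅ := by
    ext m
    simp only [Finset.mem_filter, Fintype.mem_piFinset, Finset.mem_range, hodd,
      Fin.sum_univ_one]
    constructor
    · rintro ⟨h1, h2, h3⟩
      have hm0 : m = fun _ => ℓ := funext fun r => by
        have : r = 0 := Subsingleton.elim _ _
        rw [this]; exact h2
      simp at h3
      simp [← h3, hm0]
    · intro hm
      by_cases hpp : p = 0
      · rw [if_pos hpp, Finset.mem_singleton] at hm
        subst hm
        exact ⟨fun r => by simp, rfl, by omega⟩
      · rw [if_neg hpp] at hm; exact absurd hm (Finset.notMem_empty m)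
  rw [h]; split <;> simp

/-- closed form for the signed difference -/
def Elo (n ℓ : ℕ) : ℕ :=
  if n % 2 = 0 then Nat.choose (n / 2 + ℓ / 2) (n / 2)
  else if ℓ % 2 = 0 then Nat.choose (n / 2 + ℓ / 2) (ℓ / 2) else 0

lemma Elo_zero (n : ℕ) : Elo n 0 = 1 := by
  unfold Elo
  rcases Nat.mod_two_eq_zero_or_one n with h | h <;> simp [h]

lemma Elo_rec_even (m ℓ : ℕ) (hm : 1 ≤ m) (hℓ : 1 ≤ ℓ) (h2 : m % 2 = 0) :
    Elo m ℓ = Elo (m-1) ℓ + Elo m (ℓ-1) := by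
  obtain ⟨a, rfl⟩ : ∃ a, m = 2 * (a + 1) := ⟨m / 2 - 1, by omega⟩
  unfold Elo
  rcases Nat.mod_two_eq_zero_or_one ℓ with hl | hl
  · obtain ⟨b, rfl⟩ : ∃ b, ℓ = 2 * (b + 1) := ⟨ℓ / 2 - 1, by omega⟩
    have e1 : 2 * (a + 1) % 2 = 0 := by omega
    have e2 : (2 * (a + 1) - 1) % 2 = 1 := by omega
    have e3 : 2 * (b + 1) % 2 = 0 := by omega
    have e4 : (2 * (b + 1) - 1) % 2 = 1 := by omega
    rw [if_pos e1, if_neg (by omega), if_pos e3, if_pos e1]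
    have d1 : 2 * (a + 1) / 2 = a + 1 := by omega
    have d2 : (2 * (a + 1) - 1) / 2 = a := by omega
    have d3 : 2 * (b + 1) / 2 = b + 1 := by omega
    have d4 : (2 * (b + 1) - 1) / 2 = b := by omega
    rw [d1, d2, d3, d4]
    have pascal : (a + 1 + (b + 1)).choose (a + 1)
        = (a + b + 1).choose a + (a + b + 1).choose (a + 1) := by
      have : a + 1 + (b + 1) = (a + b + 1) + 1 := by ring
      rw [this, Nat.choose_succ_succ]
    have symm : (a + (b + 1)).choose (b + 1) = (a + b + 1).choose a := by
      have h1 : a + (b + 1) = a + b + 1 := by ring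
      rw [h1, ← Nat.choose_symm (by omega : a ≤ a + b + 1)]
      congr 1; omega
    have hfin : a + 1 + b = a + b + 1 := by ring
    rw [pascal, symm, hfin]
  · obtain ⟨b, rfl⟩ : ∃ b, ℓ = 2 * b + 1 := ⟨ℓ / 2, by omega⟩
    have e1 : 2 * (a + 1) % 2 = 0 := by omega
    rw [if_pos e1, if_neg (by omega), if_neg (by omega), if_pos e1]
    have d1 : (2 * b + 1) / 2 = b := by omega
    have d2 : (2 * b + 1 - 1) / 2 = b := by omega
    rw [d1, d2]
    omega
lemma Elo_rec_odd (m ℓ : ℕ) (hm : 1 ≤ m) (hℓ : 1 ≤ ℓ) (h2 : m % 2 = 1) :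
    Elo (m-1) ℓ = Elo m ℓ + Elo m (ℓ-1) := by
  obtain ⟨a, rfl⟩ : ∃ a, m = 2 * a + 1 := ⟨m / 2, by omega⟩
  unfold Elo
  have e0 : (2 * a + 1 - 1) % 2 = 0 := by omega
  have d0 : (2 * a + 1 - 1) / 2 = a := by omega
  have e1 : ¬ (2 * a + 1) % 2 = 0 := by omega
  have d1 : (2 * a + 1) / 2 = a := by omega
  rcases Nat.mod_two_eq_zero_or_one ℓ with hl | hl
  · obtain ⟨b, rfl⟩ : ∃ b, ℓ = 2 * (b + 1) := ⟨ℓ / 2 - 1, by omega⟩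
    rw [if_pos e0, if_neg e1, if_pos (by omega), if_neg e1, if_neg (by omega)]
    rw [d0, d1]
    have d3 : 2 * (b + 1) / 2 = b + 1 := by omega
    rw [d3]
    have : (a + (b + 1)).choose (b + 1) = (a + (b + 1)).choose a := by
      rw [← Nat.choose_symm (by omega : b + 1 ≤ a + (b + 1))]
      congr 1; omega
    omega
  · obtain ⟨b, rfl⟩ : ∃ b, ℓ = 2 * b + 1 := ⟨ℓ / 2, by omega⟩
    rw [if_pos e0, if_neg e1, if_neg (by omega), if_neg e1, if_pos (by omega)]
    rw [d0, d1]
    have d3 : (2 * b + 1) / 2 = b := by omega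
    have d4 : (2 * b + 1 - 1) / 2 = b := by omega
    rw [d3, d4]
    have : (a + b).choose b = (a + b).choose a := by
      rw [← Nat.choose_symm (by omega : b ≤ a + b)]
      congr 1; omega
    omega

lemma P_sub (n ℓ : ℕ) : P (n+1) ℓ 0 = P (n+1) ℓ 1 + Elo n ℓ := by
  induction n generalizing ℓ with
  | zero => rw [P_one, P_one]; simp [Elo]
  | succ n ih =>
    induction ℓ with
    | zero => rw [P_zero, P_zero, Elo_zero]; simp
    | succ ℓ ihℓ =>
      have h0 := P_split (n+1) ℓ 0 (by omega)
      have h1 := P_split (n+1) ℓ 1 (by omega)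
      have ihl := ih (ℓ+1)
      rcases Nat.mod_two_eq_zero_or_one (n+1) with hpar | hpar
      · rw [show (0 + (n+1)) % 2 = 0 by omega] at h0
        rw [show (1 + (n+1)) % 2 = 1 by omega] at h1
        have hrec := Elo_rec_even (n+1) (ℓ+1) (by omega) (by omega) hpar
        simp only [Nat.add_sub_cancel] at hrec
        omega
      · rw [show (0 + (n+1)) % 2 = 1 by omega] at h0
        rw [show (1 + (n+1)) % 2 = 0 by omega] at h1
        have hrec := Elo_rec_odd (n+1) (ℓ+1) (by omega) (by omega) hpar
        simp only [Nat.add_sub_cancel] at hrec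
        omega

lemma lozanicT_eq_P (n ℓ : ℕ) : lozanicT n ℓ = P (n+1) ℓ 0 := rfl

/-- **Lozanić-triangle recursion.** For `n ≥ 1` and `ℓ ≥ 1`,
`lozanicT(n,ℓ) = lozanicT(n,ℓ-1) + lozanicT(n-1,ℓ) - c(n,ℓ)` where
`c(n,ℓ) = C((n+ℓ)/2 - 1, (ℓ-1)/2)` if both `n` and `ℓ` are odd, and `0` otherwise. -/
theorem stmt_16 (n ℓ : ℕ) (hn : 1 ≤ n) (hℓ : 1 ≤ ℓ) :
    lozanicT n ℓ + (if n % 2 = 1 ∧ ℓ % 2 = 1 then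
        Nat.choose ((n + ℓ) / 2 - 1) ((ℓ - 1) / 2) else 0)
      = lozanicT n (ℓ - 1) + lozanicT (n - 1) ℓ := by
  obtain ⟨n', rfl⟩ : ∃ n', n = n' + 1 := ⟨n-1, by omega⟩
  obtain ⟨ℓ', rfl⟩ : ∃ ℓ', ℓ = ℓ' + 1 := ⟨ℓ-1, by omega⟩
  simp only [Nat.add_sub_cancel]
  rw [lozanicT_eq_P, lozanicT_eq_P, lozanicT_eq_P]
  have hsplit := P_split (n'+1) ℓ' 0 (by omega)
  rcases Nat.mod_two_eq_zero_or_one (n'+1) with hpar | hpar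
  · rw [if_neg (by omega)]
    rw [show (0 + (n'+1)) % 2 = 0 by omega] at hsplit
    omega
  · rw [show (0 + (n'+1)) % 2 = 1 by omega] at hsplit
    have hsub := P_sub (n'+1) ℓ'
    rcases Nat.mod_two_eq_zero_or_one (ℓ'+1) with hl | hl
    · rw [if_neg (by omega)]
      have hE : Elo (n'+1) ℓ' = 0 := by
        unfold Elo; rw [if_neg (by omega), if_neg (by omega)]
      omega
    · rw [if_pos ⟨by omega, by omega⟩]
      have hE : Elo (n'+1) ℓ' = Nat.choose ((n' + 1 + (ℓ' + 1)) / 2 - 1) (ℓ' / 2) := by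
        unfold Elo
        rw [if_neg (by omega), if_pos (by omega)]
        congr 1
        omega
      omega
end
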